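/- For the 3×3 posterior information matrix J(M) = diag(σ_θ⁻², σ_β⁻², σ_α⁻²) + σ⁻²·[[M, M, S],[M, M, S],[S, S, Q]] with S = MT/2 and Q = T²M(2M−1)/(6(M−1)), the determinant det J(M) grows at least linearly in M; more precisely det J(M) ≥ c·M² for some constant c > 0 depending only on T, σ, σ_θ, σ_β, σ_α, for all sufficiently large M. -/

import Mathlib

/-!
With `a, b, d` the diagonal entries and `s = σ⁻²`, the determinant of `J(M)` expands as
`abd + s (Qab + Md(a + b)) + s² (a + b)(MQ - S²)`, a sum of nonnegative terms. The last one grows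
like `M²` because the 2×2 minor is `MQ - S² = T²M²(M + 1) / (12(M - 1)) ≥ T²M² / 12`.
-/

open Matrix

/-- The Gram matrix `CᵀC` of the two-node model in closed form. -/
noncomputable def gramC (T : ℝ) (M : ℕ) : Matrix (Fin 3) (Fin 3) ℝ :=
  let S : ℝ := M * T / 2
  let Q : ℝ := T ^ 2 * M * (2 * M - 1) / (6 * ((M : ℝ) - 1))
  ![![(M : ℝ), (M : ℝ), S], ![(M : ℝ), (M : ℝ), S], ![S, S, Q]]

/-- The 3×3 information matrix `J(M)` of the two-node model. -/
noncomputable def infoJ (T σ σθ σβ σα : ℝ) (M : ℕ) : Matrix (Fin 3) (Fin 3) ℝ :=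
  Matrix.diagonal ![σθ⁻¹ ^ 2, σβ⁻¹ ^ 2, σα⁻¹ ^ 2] + σ⁻¹ ^ 2 • gramC T M

section DetDiagonalAddSmul

variable (a b d s m S Q : ℝ)

-- No `s³` term: the perturbation has two equal rows.
theorem det_diagonal_add_smul_of_rows_eq :
    (diagonal ![a, b, d] + s • !![m, m, S; m, m, S; S, S, Q]).det =
      a * b * d + s * (Q * a * b + m * d * (a + b)) + s ^ 2 * (a + b) * (m * Q - S ^ 2) := by
  simp only [det_fin_three, Matrix.add_apply, smul_of, smul_cons, smul_eq_mul, smul_empty,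
    of_apply, diagonal_apply_eq, diagonal_apply_ne, cons_val', cons_val_zero, cons_val_one, cons_val,
    cons_val_fin_one, ne_eq, Fin.reduceEq, not_false_eq_true, zero_add]
  ring

variable {a b d s m S Q}

theorem le_det_diagonal_add_smul_of_rows_eq (ha : 0 ≤ a) (hb : 0 ≤ b) (hd : 0 ≤ d) (hs : 0 ≤ s)
    (hm : 0 ≤ m) (hQ : 0 ≤ Q) :
    s ^ 2 * (a + b) * (m * Q - S ^ 2) ≤
      (diagonal ![a, b, d] + s • !![m, m, S; m, m, S; S, S, Q]).det := by
  rw [det_diagonal_add_smul_of_rows_eq]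
  have : 0 ≤ a * b * d + s * (Q * a * b + m * d * (a + b)) := by positivity
  linarith

end DetDiagonalAddSmul

theorem gramC_eq (T : ℝ) (M : ℕ) :
    gramC T M = !![(M : ℝ), M, M * T / 2; M, M, M * T / 2;
      M * T / 2, M * T / 2, T ^ 2 * M * (2 * M - 1) / (6 * ((M : ℝ) - 1))] := by
  ext i j
  fin_cases i <;> fin_cases j <;> rfl

section GramC

variable (T : ℝ) {x : ℝ}

theorem gramC_corner_nonneg (hx : 1 < x) : 0 ≤ T ^ 2 * x * (2 * x - 1) / (6 * (x - 1)) := by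
  have : 0 ≤ 2 * x - 1 := by linarith
  have : 0 < x - 1 := by linarith
  positivity

theorem sq_mul_sq_div_twelve_le_gramC_minor (hx : 1 < x) :
    T ^ 2 * x ^ 2 / 12 ≤ x * (T ^ 2 * x * (2 * x - 1) / (6 * (x - 1))) - (x * T / 2) ^ 2 := by
  have hx1 : 0 < x - 1 := by linarith
  have key : x * (T ^ 2 * x * (2 * x - 1) / (6 * (x - 1))) - (x * T / 2) ^ 2 =
      T ^ 2 * x ^ 2 / 12 + T ^ 2 * x ^ 2 / (6 * (x - 1)) := by
    field_simp
    ring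
  rw [key]
  have : 0 ≤ T ^ 2 * x ^ 2 / (6 * (x - 1)) := by positivity
  linarith

end GramC

theorem stmt_19_general (T σ σθ σβ σα : ℝ) (hT : 0 < T) (hσ : 0 < σ)
    (hθ : 0 < σθ) :
    ∃ c : ℝ, 0 < c ∧ ∃ M₀ : ℕ, ∀ M : ℕ, M₀ ≤ M →
      c * (M : ℝ) ^ 2 ≤ (infoJ T σ σθ σβ σα M).det := by
  refine ⟨(σ⁻¹ ^ 2) ^ 2 * (σθ⁻¹ ^ 2 + σβ⁻¹ ^ 2) * (T ^ 2 / 12), by positivity, 2, fun M hM => ?_⟩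
  have hM : (1 : ℝ) < M := by exact_mod_cast hM
  rw [infoJ, gramC_eq]
  calc (σ⁻¹ ^ 2) ^ 2 * (σθ⁻¹ ^ 2 + σβ⁻¹ ^ 2) * (T ^ 2 / 12) * (M : ℝ) ^ 2
      = (σ⁻¹ ^ 2) ^ 2 * (σθ⁻¹ ^ 2 + σβ⁻¹ ^ 2) * (T ^ 2 * (M : ℝ) ^ 2 / 12) := by ring
    _ ≤ (σ⁻¹ ^ 2) ^ 2 * (σθ⁻¹ ^ 2 + σβ⁻¹ ^ 2) *
        (M * (T ^ 2 * M * (2 * M - 1) / (6 * ((M : ℝ) - 1))) - (M * T / 2) ^ 2) := by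
      gcongr
      exact sq_mul_sq_div_twelve_le_gramC_minor T hM
    _ ≤ _ := le_det_diagonal_add_smul_of_rows_eq (by positivity) (by positivity) (by positivity)
        (by positivity) (by positivity) (gramC_corner_nonneg T hM)

theorem stmt_19 (T σ σθ σβ σα : ℝ) (hT : 0 < T) (hσ : 0 < σ)
    (hθ : 0 < σθ) (hβ : 0 < σβ) (hα : 0 < σα) :
    ∃ c : ℝ, 0 < c ∧ ∃ M₀ : ℕ, ∀ M : ℕ, M₀ ≤ M →
      c * (M : ℝ) ^ 2 ≤ (infoJ T σ σθ σβ σα M).det :=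
  stmt_19_general T σ σθ σβ σα hT hσ hθ
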